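/- arXiv:1404.5043 — 4 statements merged into one kernel-verified Lean document; each statement's English description precedes it below -/
import Mathlib

section
/- If a : [1,p] → ℤ≥0 and b : [1,q] → ℤ≥0 are twisting functions and the filtered modules S^p[-a] and S^q[-b] are isomorphic (as filtered modules), then p = q and a equals b up to a permutation of indices. -/
open MvPolynomial

noncomputable section

/-- The space of polynomials in `n` variables of total degree at most `d`. -/
def polyDegLE (F : Type) [Field F] (n : ℕ) (d : ℤ) :
    Submodule F (MvPolynomial (Fin n) F) where
  carrier := {f | ∀ m ∈ f.support, ((m.sum fun _ e => e : ℕ) : ℤ) ≤ d}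
  add_mem' := fun hf hg m hm =>
    (Finset.mem_union.1 (MvPolynomial.support_add hm)).elim (hf m) (hg m)
  zero_mem' := by simp
  smul_mem' := fun c f hf m hm => hf m (MvPolynomial.support_smul hm)

/-- The filtration of `S^p[-a]` for a twisting function `a : Fin p → ℕ`:
`filt F n p a d = { f : S^p | ∀ i, a i + deg (f i) ≤ d } = S^p[-a]_{≤ d}`. -/
def filt (F : Type) [Field F] (n p : ℕ) (a : Fin p → ℕ) (d : ℤ) :
    Submodule F (Fin p → MvPolynomial (Fin n) F) :=
  Submodule.pi Set.univ fun i => polyDegLE F n (d - a i)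

/-! The matrix `M` of a filtered homomorphism `S^p[-a] → S^q[-b]` has `M j i = 0` whenever
`a i < b j`, since the image of the `i`-th basis vector lies in filtration degree `a i`. If `N` is
the matrix of the inverse, then `N * M = 1`, and for every lower set `D` of degrees the block of
`M` with columns `a⁻¹ D` and rows `b⁻¹ D` inherits a left inverse from `N`; the strong rank
condition on `S` gives `#a⁻¹ D ≤ #b⁻¹ D`. By symmetry these counts agree, and comparing
`D = Iic v` with `D = Iio v` shows that `a` and `b` have fibres of the same size over every `v`. -/

open Set

theorem exists_equiv_of_ncard_preimage_eq {ι κ α : Type*} [Finite ι] [Finite κ]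
    [LinearOrder α] {a : ι → α} {b : κ → α}
    (h : ∀ D : Set α, IsLowerSet D → (a ⁻¹' D).ncard = (b ⁻¹' D).ncard) :
    ∃ σ : ι ≃ κ, ∀ i, b (σ i) = a i := by
  have hfiber (v : α) : (a ⁻¹' {v}).ncard = (b ⁻¹' {v}).ncard := by
    simp only [← Iic_sdiff_Iio_same, preimage_sdiff]
    rw [ncard_sdiff' (preimage_mono Iio_subset_Iic_self),
      ncard_sdiff' (preimage_mono Iio_subset_Iic_self), h _ (isLowerSet_Iic v),
      h _ (isLowerSet_Iio v)]
  have hequiv (v : α) : Nonempty ({i // a i = v} ≃ {j // b j = v}) :=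
    Finite.card_eq.mp (hfiber v)
  exact ⟨Equiv.ofFiberEquiv fun v => (hequiv v).some, Equiv.ofFiberEquiv_map _⟩

theorem Matrix.ncard_preimage_le_of_mul_eq_one {ι κ α R : Type*} [Fintype ι] [Fintype κ]
    [DecidableEq ι] [LinearOrder α] [CommRing R] [StrongRankCondition R]
    {a : ι → α} {b : κ → α} {M : Matrix κ ι R} {N : Matrix ι κ R} (hNM : N * M = 1)
    (hM : ∀ i j, a i < b j → M j i = 0) {D : Set α} (hD : IsLowerSet D) :
    (a ⁻¹' D).ncard ≤ (b ⁻¹' D).ncard := by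
  classical
  let M' : Matrix (b ⁻¹' D) (a ⁻¹' D) R := M.submatrix Subtype.val Subtype.val
  let N' : Matrix (a ⁻¹' D) (b ⁻¹' D) R := N.submatrix Subtype.val Subtype.val
  have hblock : N' * M' = 1 := by
    rw [← Matrix.submatrix_one _ Subtype.val_injective, ← hNM]
    ext i i'
    have hvanish (j : κ) (hj : j ∉ b ⁻¹' D) : N i j * M j i' = 0 := by
      rw [hM i' j (lt_of_not_ge fun hle => hj (hD hle i'.2)), mul_zero]
    exact (Finset.sum_congr_set _ _ _ (fun _ _ => rfl) hvanish).symm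
  have hinj : Function.Injective M'.mulVecLin :=
    Function.LeftInverse.injective (g := N'.mulVecLin) fun x => by
      rw [← LinearMap.comp_apply, ← Matrix.mulVecLin_mul, hblock, Matrix.mulVecLin_one,
        LinearMap.id_apply]
  simpa only [ncard_eq_toFinset_card', toFinset_card] using card_le_of_injective R _ hinj

section Filtration

variable {F : Type} [Field F] {n : ℕ}

theorem polyDegLE_eq_bot {d : ℤ} (hd : d < 0) : polyDegLE F n d = ⊥ := by
  refine eq_bot_iff.2 fun f hf => (Submodule.mem_bot F).2 ?_
  rw [← MvPolynomial.support_eq_empty]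
  exact Finset.eq_empty_of_forall_notMem fun m hm => by
    have hdeg := hf m hm
    omega

theorem one_mem_polyDegLE {d : ℤ} (hd : 0 ≤ d) :
    (1 : MvPolynomial (Fin n) F) ∈ polyDegLE F n d := by
  intro m hm
  rw [MvPolynomial.support_one, Finset.mem_singleton] at hm
  simpa [hm] using hd

theorem single_one_mem_filt {p : ℕ} (a : Fin p → ℕ) (i : Fin p) :
    Pi.single i 1 ∈ filt F n p a (a i) := by
  intro k _
  rcases eq_or_ne k i with rfl | hk
  · rw [Pi.single_eq_same]
    exact one_mem_polyDegLE (sub_self _).ge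
  · rw [Pi.single_eq_of_ne hk]
    exact Submodule.zero_mem _

theorem apply_eq_zero_of_mem_filt {q : ℕ} {b : Fin q → ℕ} {d : ℤ}
    {f : Fin q → MvPolynomial (Fin n) F} (hf : f ∈ filt F n q b d) {j : Fin q} (hj : d < b j) :
    f j = 0 := by
  have hfj : f j ∈ polyDegLE F n (d - b j) := hf j (mem_univ j)
  rwa [polyDegLE_eq_bot (by omega), Submodule.mem_bot] at hfj

variable {p q : ℕ} {a : Fin p → ℕ} {b : Fin q → ℕ}

theorem toMatrix'_apply_eq_zero_of_lt
    {u : (Fin p → MvPolynomial (Fin n) F) →ₗ[MvPolynomial (Fin n) F]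
      (Fin q → MvPolynomial (Fin n) F)}
    (hu : ∀ d : ℤ, ∀ f ∈ filt F n p a d, u f ∈ filt F n q b d) {i : Fin p} {j : Fin q}
    (h : a i < b j) : LinearMap.toMatrix' u j i = 0 :=
  apply_eq_zero_of_mem_filt (hu _ _ (single_one_mem_filt a i)) (by exact_mod_cast h)

theorem ncard_preimage_le_of_comp_eq_id
    {u : (Fin p → MvPolynomial (Fin n) F) →ₗ[MvPolynomial (Fin n) F]
      (Fin q → MvPolynomial (Fin n) F)}
    {v : (Fin q → MvPolynomial (Fin n) F) →ₗ[MvPolynomial (Fin n) F]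
      (Fin p → MvPolynomial (Fin n) F)}
    (hvu : v ∘ₗ u = LinearMap.id)
    (hu : ∀ d : ℤ, ∀ f ∈ filt F n p a d, u f ∈ filt F n q b d)
    {D : Set ℕ} (hD : IsLowerSet D) : (a ⁻¹' D).ncard ≤ (b ⁻¹' D).ncard :=
  Matrix.ncard_preimage_le_of_mul_eq_one
    (M := LinearMap.toMatrix' u) (N := LinearMap.toMatrix' v)
    (by rw [← LinearMap.toMatrix'_comp, hvu, LinearMap.toMatrix'_id])
    (fun _ _ h => toMatrix'_apply_eq_zero_of_lt hu h) hD

end Filtration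

/-- if `S^p[-a] ≃ S^q[-b]` as filtered modules (an `S`-linear
isomorphism `e` such that both `e` and `e⁻¹` preserve the filtrations), then
`p = q` and `a = b` up to a permutation of the indices. -/
theorem filtered_free_iso_rigidity (F : Type) [Field F] (n : ℕ)
    (p q : ℕ) (a : Fin p → ℕ) (b : Fin q → ℕ)
    (e : (Fin p → MvPolynomial (Fin n) F) ≃ₗ[MvPolynomial (Fin n) F]
         (Fin q → MvPolynomial (Fin n) F))
    (he : ∀ d : ℤ, ∀ f ∈ filt F n p a d, e f ∈ filt F n q b d)
    (he' : ∀ d : ℤ, ∀ g ∈ filt F n q b d, e.symm g ∈ filt F n p a d) :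
    p = q ∧ ∃ σ : Fin p ≃ Fin q, ∀ i, b (σ i) = a i := by
  obtain ⟨σ, hσ⟩ := exists_equiv_of_ncard_preimage_eq fun D hD =>
    le_antisymm (ncard_preimage_le_of_comp_eq_id e.symm_comp he hD)
      (ncard_preimage_le_of_comp_eq_id e.comp_symm he' hD)
  exact ⟨by simpa using Fintype.card_congr σ, σ, hσ⟩
end
end

section
/- Let C ⊆ S^q be a convolutional code with a minimal representation of memory m (i.e., there is a minimal homomorphism of filtered modules G_1 : S^{p_1}[-a_1] → C[0] with max a_1 = m). Then for all d > m, C_{≤d} = C_{≤d−1} + D_1 C_{≤d−1} + ... + D_n C_{≤d−1}. Consequently, C is determined by C_{≤m}: C is the S-submodule of S^q generated by C_{≤m}. -/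
/-!
For `d > max a`, every element of `S^p[-a]_{≤d}` lies in
`S^p[-a]_{≤d-1} + Σ_k D_k S^p[-a]_{≤d-1}`: a monomial of top degree `d - a i ≥ 1` is `D_k`
times a monomial of degree one less. A filtered map that is surjective on each level carries
this decomposition onto `C_{≤d}`. Iterating from `d = m + 1` puts every `C_{≤m+j}` in the
`S`-span of `C_{≤m}`, and every element of `C` lies in some `C_{≤d}`.
-/

open MvPolynomial

noncomputable section

/-- `C_{≤d} = C ∩ S^q_{≤d}`, as an `F`-subspace of `S^q`. -/
def codeLE (F : Type) [Field F] (n q : ℕ)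
    (C : Submodule (MvPolynomial (Fin n) F) (Fin q → MvPolynomial (Fin n) F))
    (d : ℤ) : Submodule F (Fin q → MvPolynomial (Fin n) F) :=
  (C.restrictScalars F) ⊓ filt F n q (fun _ => 0) d

/-- Multiplication by the variable `D_k` on `S^q`, as an `F`-linear map. -/
def XsmulMap (F : Type) [Field F] (n q : ℕ) (k : Fin n) :
    (Fin q → MvPolynomial (Fin n) F) →ₗ[F] (Fin q → MvPolynomial (Fin n) F) :=
  ((LinearMap.lsmul (MvPolynomial (Fin n) F)
      (Fin q → MvPolynomial (Fin n) F)) (X k)).restrictScalars F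

/-- For a filtration `W` of a submodule of `S^q`, the denominator of the graded
quotient `Γ_d`, namely `W_{≤d−1} + D₁ W_{≤d−1} + ⋯ + Dₙ W_{≤d−1}`. -/
def gammaDen (F : Type) [Field F] (n q : ℕ)
    (W : ℤ → Submodule F (Fin q → MvPolynomial (Fin n) F)) (d : ℤ) :
    Submodule F (Fin q → MvPolynomial (Fin n) F) :=
  W (d - 1) ⊔ ⨆ k : Fin n, (W (d - 1)).map (XsmulMap F n q k)

section polyDegLE

variable {F : Type} [Field F] {n : ℕ}

lemma mem_polyDegLE_iff {d : ℤ} {f : MvPolynomial (Fin n) F} :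
    f ∈ polyDegLE F n d ↔ ∀ s ∈ f.support, (s.degree : ℤ) ≤ d := Iff.rfl

lemma polyDegLE_mono {d e : ℤ} (h : d ≤ e) : polyDegLE F n d ≤ polyDegLE F n e :=
  fun _ hf s hs => (hf s hs).trans h

lemma mem_polyDegLE_totalDegree (f : MvPolynomial (Fin n) F) :
    f ∈ polyDegLE F n f.totalDegree :=
  fun _ hs => by exact_mod_cast le_totalDegree hs

lemma monomial_mem_polyDegLE {d : ℤ} {s : Fin n →₀ ℕ} (c : F) (h : (s.degree : ℤ) ≤ d) :
    monomial s c ∈ polyDegLE F n d := fun t ht => by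
  rw [Finset.mem_singleton.1 (support_monomial_subset ht)]
  exact h

lemma X_mul_mem_polyDegLE {d : ℤ} {f : MvPolynomial (Fin n) F} (k : Fin n)
    (hf : f ∈ polyDegLE F n d) : X k * f ∈ polyDegLE F n (d + 1) := by
  rw [mem_polyDegLE_iff] at hf ⊢
  intro s hs
  rw [support_X_mul, Finset.mem_map] at hs
  obtain ⟨t, ht, rfl⟩ := hs
  have hdeg : ((Finsupp.single k 1 + t).degree : ℤ) = t.degree + 1 := by
    rw [map_add, Finsupp.degree_single]; push_cast; ring
  simpa only [addLeftEmbedding_apply, hdeg, add_le_add_iff_right] using hf t ht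

end polyDegLE

section filt

variable {F : Type} [Field F] {n p : ℕ}

lemma XsmulMap_apply (k : Fin n) (x : Fin p → MvPolynomial (Fin n) F) :
    XsmulMap F n p k x = (X k : MvPolynomial (Fin n) F) • x := rfl

lemma filt_mono (a : Fin p → ℕ) {d e : ℤ} (h : d ≤ e) : filt F n p a d ≤ filt F n p a e :=
  fun _ hf i hi => polyDegLE_mono (by omega) (hf i hi)

lemma single_mem_filt {a : Fin p → ℕ} {d : ℤ} {i : Fin p} {g : MvPolynomial (Fin n) F}
    (hg : g ∈ polyDegLE F n (d - a i)) : Pi.single i g ∈ filt F n p a d := by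
  intro j _
  by_cases h : j = i
  · subst h
    simpa using hg
  · rw [Pi.single_eq_of_ne h]
    exact zero_mem _

lemma single_monomial_mem_gammaDen_filt {a : Fin p → ℕ} {d : ℤ} {i : Fin p}
    (hi : (a i : ℤ) < d) {s : Fin n →₀ ℕ} (c : F) (hs : (s.degree : ℤ) ≤ d - a i) :
    Pi.single i (monomial s c) ∈ gammaDen F n p (filt F n p a) d := by
  rw [gammaDen]
  by_cases hlow : (s.degree : ℤ) ≤ d - 1 - a i
  · exact Submodule.mem_sup_left (single_mem_filt (monomial_mem_polyDegLE c hlow))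
  -- otherwise `s` has degree `d - a i ≥ 1`, so it is divisible by some variable `D_k`
  obtain ⟨k, hk⟩ : ∃ k, s k ≠ 0 := by
    by_contra! h0
    rw [Finsupp.ext h0 (g := 0), map_zero] at hlow
    omega
  set s' := s - Finsupp.single k 1
  have hs' : s' + Finsupp.single k 1 = s := Finsupp.sub_add_single_one_cancel hk
  have hdeg : (s.degree : ℤ) = s'.degree + 1 := by
    rw [← hs', map_add, Finsupp.degree_single]; push_cast; ring
  refine Submodule.mem_sup_right (Submodule.mem_iSup_of_mem k
    ⟨Pi.single i (monomial s' c), single_mem_filt (monomial_mem_polyDegLE c (by omega)), ?_⟩)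
  rw [XsmulMap_apply, ← Pi.single_smul', smul_eq_mul, ← hs', add_comm, monomial_single_add,
    pow_one]

lemma filt_le_gammaDen_filt {a : Fin p → ℕ} {d : ℤ} (hd : ∀ i, (a i : ℤ) < d) :
    filt F n p a d ≤ gammaDen F n p (filt F n p a) d := by
  intro f hf
  rw [← Finset.univ_sum_single f]
  refine Submodule.sum_mem _ fun i _ => ?_
  change f i ∈ (gammaDen F n p (filt F n p a) d).comap
    (LinearMap.single F (fun _ => MvPolynomial (Fin n) F) i)
  rw [← (f i).support_sum_monomial_coeff]
  exact Submodule.sum_mem _ fun s hs =>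
    single_monomial_mem_gammaDen_filt (hd i) _ (hf i (Set.mem_univ i) s hs)

end filt

lemma map_gammaDen_le {n p q : ℕ} {F : Type} [Field F]
    (u : (Fin p → MvPolynomial (Fin n) F) →ₗ[MvPolynomial (Fin n) F]
      (Fin q → MvPolynomial (Fin n) F))
    {W : ℤ → Submodule F (Fin p → MvPolynomial (Fin n) F)}
    {V : ℤ → Submodule F (Fin q → MvPolynomial (Fin n) F)} {d : ℤ}
    (h : (W (d - 1)).map (u.restrictScalars F) ≤ V (d - 1)) :
    (gammaDen F n p W d).map (u.restrictScalars F) ≤ gammaDen F n q V d := by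
  rw [gammaDen, Submodule.map_sup, Submodule.map_iSup]
  refine sup_le_sup h (iSup_mono fun k => ?_)
  have hcomm : (u.restrictScalars F).comp (XsmulMap F n p k) =
      (XsmulMap F n q k).comp (u.restrictScalars F) :=
    LinearMap.ext fun x => u.map_smul (X k) x
  rw [← Submodule.map_comp, hcomm, Submodule.map_comp]
  exact Submodule.map_mono h

section codeLE

variable {F : Type} [Field F] {n q : ℕ}
  {C : Submodule (MvPolynomial (Fin n) F) (Fin q → MvPolynomial (Fin n) F)}

lemma codeLE_mono {d e : ℤ} (h : d ≤ e) : codeLE F n q C d ≤ codeLE F n q C e :=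
  inf_le_inf_left _ (filt_mono _ h)

lemma mem_codeLE_sup_totalDegree {c : Fin q → MvPolynomial (Fin n) F} (hc : c ∈ C) :
    c ∈ codeLE F n q C (Finset.univ.sup fun i => (c i).totalDegree : ℕ) := by
  refine ⟨hc, fun i _ => polyDegLE_mono ?_ (mem_polyDegLE_totalDegree (c i))⟩
  have : (c i).totalDegree ≤ Finset.univ.sup fun i => (c i).totalDegree :=
    Finset.le_sup (f := fun i => (c i).totalDegree) (Finset.mem_univ i)
  push_cast
  omega

lemma X_smul_mem_codeLE {d : ℤ} (k : Fin n) {x : Fin q → MvPolynomial (Fin n) F}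
    (hx : x ∈ codeLE F n q C d) :
    (X k : MvPolynomial (Fin n) F) • x ∈ codeLE F n q C (d + 1) := by
  refine ⟨C.smul_mem _ hx.1, fun j _ => ?_⟩
  simpa [sub_add_eq_add_sub] using X_mul_mem_polyDegLE k (hx.2 j (Set.mem_univ j))

lemma gammaDen_codeLE_le (d : ℤ) : gammaDen F n q (codeLE F n q C) d ≤ codeLE F n q C d := by
  refine sup_le (codeLE_mono (by omega)) (iSup_le fun k => ?_)
  rw [Submodule.map_le_iff_le_comap]
  intro x hx
  rw [Submodule.mem_comap, XsmulMap_apply]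
  simpa using X_smul_mem_codeLE k hx

end codeLE

lemma le_span_of_le_gammaDen {F : Type} [Field F] {n q : ℕ}
    {W : ℤ → Submodule F (Fin q → MvPolynomial (Fin n) F)} {m : ℤ}
    (h : ∀ d, m < d → W d ≤ gammaDen F n q W d) (j : ℕ) :
    W (m + j) ≤ (Submodule.span (MvPolynomial (Fin n) F)
      (W m : Set (Fin q → MvPolynomial (Fin n) F))).restrictScalars F := by
  induction j with
  | zero => exact fun x hx => Submodule.subset_span (by simpa using hx)
  | succ j ih =>
    have hprev : m + (j + 1 : ℕ) - 1 = m + j := by push_cast; ring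
    refine (h _ (by omega)).trans (sup_le ?_ (iSup_le fun k => ?_))
    · rwa [hprev]
    · rw [hprev, Submodule.map_le_iff_le_comap]
      exact fun x hx => Submodule.smul_mem _ (X k) (ih hx)

theorem memory_determines_code_general (F : Type) [Field F] (n q p₁ : ℕ)
    (a₁ : Fin p₁ → ℕ) (m : ℕ) (hm : m = Finset.univ.sup a₁)
    (C : Submodule (MvPolynomial (Fin n) F) (Fin q → MvPolynomial (Fin n) F))
    (u : (Fin p₁ → MvPolynomial (Fin n) F) →ₗ[MvPolynomial (Fin n) F]
         (Fin q → MvPolynomial (Fin n) F))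
    (hfilt : ∀ d : ℤ, ∀ f ∈ filt F n p₁ a₁ d, u f ∈ codeLE F n q C d)
    -- minimality, condition 1: level-wise surjectivity onto `C_{≤d}`
    (hsurj : ∀ d : ℤ, ∀ c ∈ codeLE F n q C d, ∃ f ∈ filt F n p₁ a₁ d, u f = c) :
    (∀ d : ℤ, (m : ℤ) < d → codeLE F n q C d = gammaDen F n q (codeLE F n q C) d) ∧
    C = Submodule.span (MvPolynomial (Fin n) F)
          (codeLE F n q C (m : ℤ) : Set (Fin q → MvPolynomial (Fin n) F)) := by
  have hstable (d : ℤ) (hd : (m : ℤ) < d) :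
      codeLE F n q C d = gammaDen F n q (codeLE F n q C) d := by
    refine le_antisymm (fun c hc => ?_) (gammaDen_codeLE_le d)
    obtain ⟨f, hf, rfl⟩ := hsurj d c hc
    have ha (i : Fin p₁) : (a₁ i : ℤ) < d :=
      lt_of_le_of_lt (by exact_mod_cast hm ▸ Finset.le_sup (Finset.mem_univ i)) hd
    exact map_gammaDen_le u (Submodule.map_le_iff_le_comap.2 (hfilt (d - 1)))
      ⟨f, filt_le_gammaDen_filt ha hf, rfl⟩
  refine ⟨hstable, le_antisymm (fun c hc => ?_) (Submodule.span_le.2 fun x hx => hx.1)⟩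
  exact le_span_of_le_gammaDen (fun d hd => (hstable d hd).le)
    (Finset.univ.sup fun i => (c i).totalDegree)
    (codeLE_mono (by omega) (mem_codeLE_sup_totalDegree hc))

/-- let `C ⊆ S^q` be a convolutional code with a minimal representation
`u = G₁ : S^{p₁}[-a₁] → C[0]` of memory `m = max a₁` (minimal: surjective on every
filtration level, and inducing bijections on the graded quotients `Γ_d`).  Then for
all `d > m`, `C_{≤d} = C_{≤d−1} + D₁ C_{≤d−1} + ⋯ + Dₙ C_{≤d−1}`; consequently `C`
is recovered from `C_{≤m}`: it is the `S`-submodule generated by `C_{≤m}`. -/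
theorem memory_determines_code (F : Type) [Field F] (n q p₁ : ℕ)
    (a₁ : Fin p₁ → ℕ) (m : ℕ) (hm : m = Finset.univ.sup a₁)
    (C : Submodule (MvPolynomial (Fin n) F) (Fin q → MvPolynomial (Fin n) F))
    (u : (Fin p₁ → MvPolynomial (Fin n) F) →ₗ[MvPolynomial (Fin n) F]
         (Fin q → MvPolynomial (Fin n) F))
    (hrange : LinearMap.range u ≤ C)
    (hfilt : ∀ d : ℤ, ∀ f ∈ filt F n p₁ a₁ d, u f ∈ codeLE F n q C d)
    -- minimality, condition 1: level-wise surjectivity onto `C_{≤d}`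
    (hsurj : ∀ d : ℤ, ∀ c ∈ codeLE F n q C d, ∃ f ∈ filt F n p₁ a₁ d, u f = c)
    -- minimality, condition 2: the induced maps `Γ_d(u)` are bijective
    (hΓinj : ∀ d : ℤ, ∀ f ∈ filt F n p₁ a₁ d,
      u f ∈ gammaDen F n q (codeLE F n q C) d →
        f ∈ gammaDen F n p₁ (filt F n p₁ a₁) d)
    (hΓsurj : ∀ d : ℤ, ∀ c ∈ codeLE F n q C d,
      ∃ f ∈ filt F n p₁ a₁ d, u f - c ∈ gammaDen F n q (codeLE F n q C) d) :
    (∀ d : ℤ, (m : ℤ) < d → codeLE F n q C d = gammaDen F n q (codeLE F n q C) d) ∧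
    C = Submodule.span (MvPolynomial (Fin n) F)
          (codeLE F n q C (m : ℤ) : Set (Fin q → MvPolynomial (Fin n) F)) :=
  memory_determines_code_general F n q p₁ a₁ m hm C u hfilt hsurj
end
end

section
/- (Forney's theorem, n = 1.) Let G ∈ F[D]^{q×p} be a polynomial matrix with no zero column, a its column degree function, and G^L the matrix whose j-th column is the degree-a(j) leading form of the j-th column of G (equivalently, the leading coefficient matrix times diag(D^{a(j)})). Then G has the predictable degree property (deg(Gf) = max_j (a(j) + deg f_j) for every f ∈ F[D]^p) if and only if the leading coefficient matrix of G has full column rank. -/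
/-!
Put `W f = max_j (a j + deg f_j)`. As `deg G i j ≤ a j`, every entry of `G f` has degree at most
`W f = d`, and its coefficient of `D^d` is the corresponding entry of `L c`, where `L` is the
leading coefficient matrix and `c j` is the coefficient of `D^(d - a j)` in `f j`; some column
attains the maximum, so `c ≠ 0`. Hence `deg (G f) = W f` iff `L c ≠ 0`, which always holds when
`L` is injective. Conversely every nonzero `c` arises this way, from `f j = c j D^(N - a j)` with
`N = max_j a j`.
-/

noncomputable section

/-- The column degree function of a univariate polynomial matrix `G` (with no zero
columns): `a j = deg` of the `j`-th column `= max_i deg (G i j)`. -/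
def colDeg1 {F : Type} [Field F] {q p : ℕ}
    (G : Matrix (Fin q) (Fin p) (Polynomial F)) (j : Fin p) : ℕ :=
  Finset.univ.sup fun i => (G i j).natDegree

/-- The leading coefficient matrix of `G`: its `j`-th column consists of the
coefficients of `D^{a j}` in the `j`-th column of `G`. -/
def leadCoeffMatrix {F : Type} [Field F] {q p : ℕ}
    (G : Matrix (Fin q) (Fin p) (Polynomial F)) : Matrix (Fin q) (Fin p) F :=
  fun i j => (G i j).coeff (colDeg1 G j)

open Polynomial Finset Matrix

lemma natDegree_le_colDeg1 {F : Type} [Field F] {q p : ℕ}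
    (G : Matrix (Fin q) (Fin p) F[X]) (i : Fin q) (j : Fin p) :
    (G i j).natDegree ≤ colDeg1 G j :=
  le_sup (f := fun i => (G i j).natDegree) (mem_univ i)

namespace Polynomial

variable {R : Type*} [Semiring R] {m n : Type*}

lemma sup_degree_eq_iff_exists_coeff_ne_zero [Fintype m] {v : m → R[X]} {d : ℕ}
    (hv : ∀ i, (v i).degree ≤ d) :
    univ.sup (fun i => (v i).degree) = d ↔ ∃ i, (v i).coeff d ≠ 0 := by
  refine ⟨fun h => ?_, fun ⟨i, hi⟩ => ?_⟩
  · by_contra! h0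
    have hlt : univ.sup (fun i => (v i).degree) < d :=
      (Finset.sup_lt_iff (WithBot.bot_lt_coe d)).2 fun i _ =>
        (hv i).lt_of_ne fun he => coeff_ne_zero_of_eq_degree he (h0 i)
    exact hlt.ne h
  · exact le_antisymm (Finset.sup_le fun i _ => hv i)
      ((le_degree_of_ne_zero hi).trans (le_sup (f := fun i => (v i).degree) (mem_univ i)))

/-- For `d = deg_a f`, the top coefficients of `f`. -/
def shiftedCoeffVec (a : n → ℕ) (d : ℕ) (f : n → R[X]) : n → R :=
  fun j => (f j).coeff (d - a j)

def monomialVec (a : n → ℕ) (N : ℕ) (c : n → R) : n → R[X] :=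
  fun j => C (c j) * X ^ (N - a j)

lemma shiftedCoeffVec_monomialVec (a : n → ℕ) (N : ℕ) (c : n → R) :
    shiftedCoeffVec a N (monomialVec a N c) = c := by
  ext j
  simp [shiftedCoeffVec, monomialVec]

variable [Fintype n]

/-- The paper's `deg_a f`. -/
def weightedDegree (a : n → ℕ) (f : n → R[X]) : WithBot ℕ :=
  univ.sup fun j => (a j : WithBot ℕ) + (f j).degree

lemma le_weightedDegree (a : n → ℕ) (f : n → R[X]) (j : n) :
    (a j : WithBot ℕ) + (f j).degree ≤ weightedDegree a f :=
  le_sup (f := fun j => (a j : WithBot ℕ) + (f j).degree) (mem_univ j)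

lemma shiftedCoeffVec_ne_zero {a : n → ℕ} {f : n → R[X]} {d : ℕ}
    (hd : weightedDegree a f = d) : shiftedCoeffVec a d f ≠ 0 := by
  have hn : (univ : Finset n).Nonempty := by
    by_contra h
    simp [weightedDegree, not_nonempty_iff_eq_empty.1 h] at hd
  obtain ⟨j, -, hj⟩ := exists_mem_eq_sup univ hn fun j => (a j : WithBot ℕ) + (f j).degree
  rw [← weightedDegree, hd] at hj
  have hfj : f j ≠ 0 := by
    rintro h
    simp [h] at hj
  rw [degree_eq_natDegree hfj] at hj
  have hdj : d - a j = (f j).natDegree := by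
    have : d = a j + (f j).natDegree := by exact_mod_cast hj
    omega
  intro h
  have := congrFun h j
  simp only [shiftedCoeffVec, hdj, Pi.zero_apply, coeff_natDegree] at this
  exact hfj (leadingCoeff_eq_zero.1 this)

lemma weightedDegree_monomialVec {a : n → ℕ} {N : ℕ} (ha : ∀ j, a j ≤ N) {c : n → R}
    (hc : c ≠ 0) : weightedDegree a (monomialVec a N c) = N := by
  have hterm : ∀ j, c j ≠ 0 → (a j : WithBot ℕ) + (monomialVec a N c j).degree = N := by
    intro j hj
    rw [monomialVec, degree_C_mul_X_pow _ hj, ← Nat.cast_add, Nat.add_sub_cancel' (ha j)]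
  obtain ⟨j₀, hj₀⟩ := Function.ne_iff.1 hc
  refine le_antisymm (Finset.sup_le fun j _ => ?_) (hterm j₀ hj₀ ▸ le_weightedDegree a _ j₀)
  by_cases hj : c j = 0
  · simp [monomialVec, hj]
  · exact (hterm j hj).le

section ColumnDegreeBound

variable {G : Matrix m n R[X]} {a : n → ℕ}

lemma degree_mulVec_le_weightedDegree (hG : ∀ i j, (G i j).natDegree ≤ a j)
    (f : n → R[X]) (i : m) : ((G *ᵥ f) i).degree ≤ weightedDegree a f := by
  refine (degree_sum_le _ _).trans (sup_mono_fun fun j _ => (degree_mul_le _ _).trans ?_)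
  gcongr
  exact degree_le_natDegree.trans (by exact_mod_cast hG i j)

lemma coeff_mulVec_eq_mulVec_shiftedCoeffVec (hG : ∀ i j, (G i j).natDegree ≤ a j)
    {f : n → R[X]} {d : ℕ} (hd : weightedDegree a f ≤ d) (i : m) :
    ((G *ᵥ f) i).coeff d =
      (Matrix.of (fun i j => (G i j).coeff (a j)) *ᵥ shiftedCoeffVec a d f) i := by
  simp only [Matrix.mulVec, dotProduct, finsetSum_coeff]
  refine sum_congr rfl fun j _ => ?_
  by_cases hfj : f j = 0
  · simp [hfj, shiftedCoeffVec]
  have hdeg : a j + (f j).natDegree ≤ d := by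
    have := (le_weightedDegree a f j).trans hd
    rwa [degree_eq_natDegree hfj, ← Nat.cast_add, Nat.cast_le] at this
  obtain ⟨e, rfl⟩ := Nat.exists_eq_add_of_le (le_of_add_le_left hdeg)
  rw [coeff_mul_add_eq_of_natDegree_le (hG i j) (by omega : (f j).natDegree ≤ e)]
  simp [shiftedCoeffVec]

lemma sup_degree_mulVec_eq_iff [Fintype m] (hG : ∀ i j, (G i j).natDegree ≤ a j)
    {f : n → R[X]} {d : ℕ} (hd : weightedDegree a f = d) :
    univ.sup (fun i => ((G *ᵥ f) i).degree) = d ↔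
      Matrix.of (fun i j => (G i j).coeff (a j)) *ᵥ shiftedCoeffVec a d f ≠ 0 := by
  rw [sup_degree_eq_iff_exists_coeff_ne_zero fun i => hd ▸ degree_mulVec_le_weightedDegree hG f i,
    Function.ne_iff]
  simp only [coeff_mulVec_eq_mulVec_shiftedCoeffVec hG hd.le, Pi.zero_apply]

end ColumnDegreeBound

end Polynomial

theorem forney_PD_iff_leading_full_rank_general (F : Type) [Field F] (q p : ℕ)
    (G : Matrix (Fin q) (Fin p) (Polynomial F)) :
    (∀ f : Fin p → Polynomial F,
        (Finset.univ.sup fun i => (G.mulVec f i).degree) =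
          Finset.univ.sup fun j => ((colDeg1 G j : ℕ) : WithBot ℕ) + (f j).degree) ↔
      Function.Injective ((leadCoeffMatrix G).mulVec : (Fin p → F) → Fin q → F) := by
  have hG := natDegree_le_colDeg1 G
  have hL : Function.Injective (leadCoeffMatrix G).mulVec ↔
      ∀ c, c ≠ 0 → leadCoeffMatrix G *ᵥ c ≠ 0 := by
    simpa only [not_imp_not, coe_mulVecLin] using injective_iff_map_eq_zero (leadCoeffMatrix G).mulVecLin
  rw [hL]
  constructor
  · intro hPD c hc
    have hW := weightedDegree_monomialVec (fun j => le_sup (f := colDeg1 G) (mem_univ j)) hc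
    have hLc := (sup_degree_mulVec_eq_iff hG hW).1 ((hPD _).trans hW)
    rwa [shiftedCoeffVec_monomialVec] at hLc
  · intro hL f
    refine le_antisymm (Finset.sup_le fun i _ => degree_mulVec_le_weightedDegree hG f i) ?_
    change weightedDegree (colDeg1 G) f ≤ _
    cases hW : weightedDegree (colDeg1 G) f with
    | bot => exact bot_le
    | coe d => exact ((sup_degree_mulVec_eq_iff hG hW).2 (hL _ (shiftedCoeffVec_ne_zero hW))).ge

/-- Forney's theorem, `n = 1`: a polynomial matrix `G` with no zero
column has the predictable degree property — `deg (G f) = max_j (a j + deg f_j)` for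
every `f`, degrees taken in `WithBot ℕ` so that `deg 0 = -∞` — if and only if its
leading coefficient matrix has full column rank (i.e. acts injectively on `F^p`). -/
theorem forney_PD_iff_leading_full_rank (F : Type) [Field F] (q p : ℕ)
    (G : Matrix (Fin q) (Fin p) (Polynomial F))
    (hnz : ∀ j, ∃ i, G i j ≠ 0) :
    (∀ f : Fin p → Polynomial F,
        (Finset.univ.sup fun i => (G.mulVec f i).degree) =
          Finset.univ.sup fun j => ((colDeg1 G j : ℕ) : WithBot ℕ) + (f j).degree) ↔
      Function.Injective ((leadCoeffMatrix G).mulVec : (Fin p → F) → Fin q → F) :=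
  forney_PD_iff_leading_full_rank_general F q p G
end
end

section
/- Let S = F[D] and let C ⊆ S^q be a submodule with polynomial resolution 0 → S^{p_1} → S^q given by a matrix G := G_1 of full column rank with Im(G) = C. Then the quotient S^q/Im(G) is torsion free (C is observable) if and only if, for every irreducible polynomial λ ∈ F[D], the reduction of G modulo λ is an injective map (F[D]/λ)^{p_1} → (F[D]/λ)^q. -/
noncomputable section

private lemma map_comp_mulVec {R T : Type*} [CommRing R] [CommRing T] (f : R →+* T)
    {q p : ℕ} (G : Matrix (Fin q) (Fin p) R) (w : Fin p → R) :
    (G.map f).mulVec (fun i => f (w i)) = fun i => f (G.mulVec w i) := by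
  ext i
  simp [Matrix.mulVec, dotProduct, map_sum]

/-- Key step: if the reduction of `G` mod a prime `lam` is injective,
then `lam • u ∈ Im G` implies `u ∈ Im G`. -/
private lemma prime_smul_mem {F : Type} [Field F] {q p : ℕ}
    (G : Matrix (Fin q) (Fin p) (Polynomial F))
    (hfc : Function.Injective
      (G.mulVec : (Fin p → Polynomial F) → Fin q → Polynomial F))
    {lam : Polynomial F} (hlam : lam ≠ 0)
    (hinj : Function.Injective
        ((G.map (Ideal.Quotient.mk (Ideal.span {lam}))).mulVec :
          (Fin p → Polynomial F ⧸ Ideal.span {lam}) →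
            Fin q → Polynomial F ⧸ Ideal.span {lam}))
    (u : Fin q → Polynomial F) (hu : lam • u ∈ LinearMap.range G.mulVecLin) :
    u ∈ LinearMap.range G.mulVecLin := by
  set mk := Ideal.Quotient.mk (Ideal.span {lam}) with hmkdef
  obtain ⟨w, hw⟩ := hu
  have hw' : G.mulVec w = lam • u := hw
  have hmod : (G.map mk).mulVec (fun i => mk (w i)) = 0 := by
    rw [map_comp_mulVec]
    funext i
    rw [hw']
    have : (lam • u) i = lam * u i := rfl
    rw [this]
    refine Ideal.Quotient.eq_zero_iff_mem.mpr ?_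
    exact Ideal.mem_span_singleton.mpr ⟨u i, rfl⟩
  have hzero : (fun i => mk (w i)) = (0 : Fin p → Polynomial F ⧸ Ideal.span {lam}) := by
    apply hinj
    rw [hmod, Matrix.mulVec_zero]
  have hdvd : ∀ i, lam ∣ w i := by
    intro i
    have : mk (w i) = 0 := congrFun hzero i
    exact Ideal.mem_span_singleton.mp (Ideal.Quotient.eq_zero_iff_mem.mp this)
  choose w' hw'' using hdvd
  have hweq : w = lam • w' := by
    funext i
    exact hw'' i
  have : lam • u = lam • (G.mulVec w') := by
    rw [← hw', hweq, Matrix.mulVec_smul]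
  refine ⟨w', ?_⟩
  show G.mulVec w' = u
  funext i
  have hcomp : lam * u i = lam * (G.mulVec w') i := congrFun this i
  exact (mul_left_cancel₀ hlam hcomp).symm

/-- observability, `n = 1`, `l = 1`: let `S = F[D]`, `G ∈ S^{q×p}` of
full column rank and `C = Im(G) ⊆ S^q`.  Then `S^q/C` is torsion free (`C` is
observable) if and only if for every irreducible polynomial `λ ∈ F[D]` the reduction
of `G` modulo `λ` gives an injective map `(F[D]/λ)^p → (F[D]/λ)^q`. -/
theorem observable_iff_injective_mod_irreducible (F : Type) [Field F] (q p : ℕ)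
    (G : Matrix (Fin q) (Fin p) (Polynomial F))
    (hfc : Function.Injective
      (G.mulVec : (Fin p → Polynomial F) → Fin q → Polynomial F)) :
    (∀ (s : Polynomial F) (v : Fin q → Polynomial F), s ≠ 0 →
        s • v ∈ LinearMap.range G.mulVecLin → v ∈ LinearMap.range G.mulVecLin) ↔
    (∀ lam : Polynomial F, Irreducible lam →
      Function.Injective
        ((G.map (Ideal.Quotient.mk (Ideal.span {lam}))).mulVec :
          (Fin p → Polynomial F ⧸ Ideal.span {lam}) →
            Fin q → Polynomial F ⧸ Ideal.span {lam})) := by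
  constructor
  · -- torsion free → mod-λ injective
    intro tf lam hlam
    set mk := Ideal.Quotient.mk (Ideal.span {lam}) with hmkdef
    have key : ∀ x : Fin p → Polynomial F ⧸ Ideal.span {lam},
        (G.map mk).mulVec x = 0 → x = 0 := by
      intro x hx
      choose w hw using fun i => Ideal.Quotient.mk_surjective (x i)
      have hxw : x = fun i => mk (w i) := funext fun i => (hw i).symm
      have hx' : ∀ i, mk (G.mulVec w i) = 0 := by
        intro i
        have h1 : (G.map mk).mulVec (fun j => mk (w j)) = 0 := by rw [← hxw]; exact hx
        have h2 := map_comp_mulVec mk G w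
        rw [h2] at h1
        exact congrFun h1 i
      have hdvd : ∀ i, lam ∣ G.mulVec w i := fun i =>
        Ideal.mem_span_singleton.mp (Ideal.Quotient.eq_zero_iff_mem.mp (hx' i))
      choose u hu using hdvd
      have hmem : lam • u ∈ LinearMap.range G.mulVecLin := by
        refine ⟨w, ?_⟩
        show G.mulVec w = lam • u
        funext i
        exact hu i
      obtain ⟨w', hw'⟩ := tf lam u hlam.ne_zero hmem
      have hw'2 : G.mulVec w' = u := hw'
      have : G.mulVec w = G.mulVec (lam • w') := by
        rw [Matrix.mulVec_smul, hw'2]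
        funext i
        exact hu i
      have hweq : w = lam • w' := hfc this
      rw [hxw]
      funext i
      have : w i = lam * w' i := congrFun hweq i
      rw [this, map_mul]
      have hml : mk lam = 0 :=
        Ideal.Quotient.eq_zero_iff_mem.mpr (Ideal.mem_span_singleton_self lam)
      rw [hml, zero_mul]
      rfl
    intro a b hab
    have hsub : (G.map mk).mulVec (a - b) = 0 := by
      rw [Matrix.mulVec_sub, hab, sub_self]
    have := key _ hsub
    exact sub_eq_zero.mp this
  · -- mod-λ injective → torsion free
    intro h s v
    induction s using UniqueFactorizationMonoid.induction_on_prime with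
    | h₁ => intro hne _; exact absurd rfl hne
    | h₂ x hx =>
      intro _ hmem
      have : v = (↑hx.unit⁻¹ : Polynomial F) • (x • v) := by
        rw [smul_smul]
        rw [show (↑hx.unit⁻¹ : Polynomial F) * x = 1 by
          simpa [hx.unit_spec] using hx.unit.inv_mul]
        rw [one_smul]
      rw [this]
      exact Submodule.smul_mem _ _ hmem
    | h₃ a lam ha hp IH =>
      intro hne hmem
      have hmem' : lam • (a • v) ∈ LinearMap.range G.mulVecLin := by
        rwa [← mul_smul]
      have hav := prime_smul_mem G hfc hp.ne_zero (h lam hp.irreducible) _ hmem'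
      exact IH ha hav
end
end
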